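/- arXiv:1006.3798 — 7 statements merged into one kernel-verified Lean document; each statement's English description precedes it below -/
import Mathlib

section
/- If two peers with values x and y satisfying |x - y| ≤ Δ interact, the variance of the empirical distribution of N values decreases by exactly (2·w·(1-w)/N)·(x - y)², i.e., for a vector (x_1, ..., x_N) ∈ ℝ^N with x_i = x, x_j = y (i ≠ j), replacing x_i by w·x + (1-w)·y and x_j by w·y + (1-w)·x changes the empirical variance V = (1/N)·Σ_k x_k² - ((1/N)·Σ_k x_k)² by -(2·w·(1-w)/N)·(x-y)². -/
lemma sum_upd2 {N : ℕ} (x : Fin N → ℝ) (i j : Fin N) (h : i ≠ j) (a b : ℝ) :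
    ∑ k, Function.update (Function.update x i a) j b k
      = (∑ k, x k) - x i - x j + a + b := by
  rw [Finset.sum_update_of_mem (Finset.mem_univ j)]
  simp only [Finset.sdiff_singleton_eq_erase]
  rw [Finset.sum_update_of_mem (Finset.mem_erase.mpr ⟨h, Finset.mem_univ i⟩)]
  simp only [Finset.sdiff_singleton_eq_erase]
  rw [Finset.sum_erase_eq_sub (Finset.mem_erase.mpr ⟨h, Finset.mem_univ i⟩),
    Finset.sum_erase_eq_sub (Finset.mem_univ j)]
  ring

theorem variance_drop (N : ℕ) (hN : 2 ≤ N) (w Δ : ℝ)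
    (hw : w ∈ Set.Icc (0:ℝ) 1) (hΔ : Δ ∈ Set.Ioc (0:ℝ) 1)
    (x : Fin N → ℝ) (i j : Fin N) (hij : i ≠ j)
    (hclose : |x i - x j| ≤ Δ)
    (x' : Fin N → ℝ)
    (hx' : x' = Function.update (Function.update x i (w * x i + (1 - w) * x j)) j
      (w * x j + (1 - w) * x i)) :
    ((1 / (N:ℝ)) * ∑ k, (x' k) ^ 2 - ((1 / (N:ℝ)) * ∑ k, x' k) ^ 2)
      - ((1 / (N:ℝ)) * ∑ k, (x k) ^ 2 - ((1 / (N:ℝ)) * ∑ k, x k) ^ 2)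
      = -(2 * w * (1 - w) / (N:ℝ)) * (x i - x j) ^ 2 := by
  have hN0 : (N:ℝ) ≠ 0 := by positivity
  subst hx'
  have h1 : ∑ k, Function.update (Function.update x i (w * x i + (1 - w) * x j)) j
      (w * x j + (1 - w) * x i) k
      = (∑ k, x k) - x i - x j + (w * x i + (1 - w) * x j) + (w * x j + (1 - w) * x i) :=
    sum_upd2 x i j hij _ _
  have h2 : ∑ k, (Function.update (Function.update x i (w * x i + (1 - w) * x j)) j
      (w * x j + (1 - w) * x i) k) ^ 2
      = (∑ k, (x k)^2) - (x i)^2 - (x j)^2 + (w * x i + (1 - w) * x j)^2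
        + (w * x j + (1 - w) * x i)^2 := by
    have := sum_upd2 (fun k => (x k)^2) i j hij ((w * x i + (1 - w) * x j)^2)
      ((w * x j + (1 - w) * x i)^2)
    rw [← this]
    apply Finset.sum_congr rfl
    intro k _
    simp only [Function.update]
    split_ifs <;> simp_all
  rw [h1, h2]
  field_simp
  ring
end

section
/- After an interaction step between two connected peers i and j (|x_i - x_j| ≤ Δ), the distance from each of the updated values to any other peer's value does not decrease beyond the threshold if it was already beyond: precisely, if |x_i - x_k| > Δ and |x_j - x_k| > Δ for some k ∉ {i,j}, then |x_i' - x_k| > Δ and |x_j' - x_k| > Δ, where x_i' = w·x_i + (1-w)·x_j and x_j' = w·x_j + (1-w)·x_i. -/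
theorem clusters_cannot_merge (Δ w : ℝ) (hΔ : Δ ∈ Set.Ioc (0:ℝ) 1)
    (hw : w ∈ Set.Icc (0:ℝ) 1)
    (xi xj xk : ℝ) (hxi : xi ∈ Set.Icc (0:ℝ) 1) (hxj : xj ∈ Set.Icc (0:ℝ) 1)
    (hxk : xk ∈ Set.Icc (0:ℝ) 1)
    (hconn : |xi - xj| ≤ Δ)
    (hik : |xi - xk| > Δ) (hjk : |xj - xk| > Δ) :
    |(w * xi + (1 - w) * xj) - xk| > Δ ∧ |(w * xj + (1 - w) * xi) - xk| > Δ := by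
  obtain ⟨hΔ0, hΔ1⟩ := hΔ
  obtain ⟨hw0, hw1⟩ := hw
  rw [abs_le] at hconn
  have hw1' : (0:ℝ) ≤ 1 - w := by linarith
  rcases lt_abs.mp hik with h1 | h1 <;> rcases lt_abs.mp hjk with h2 | h2
  · refine ⟨lt_abs.mpr (Or.inl ?_), lt_abs.mpr (Or.inl ?_)⟩ <;>
      nlinarith [mul_nonneg hw0 (by linarith : (0:ℝ) ≤ xi - xk - Δ),
        mul_nonneg hw1' (by linarith : (0:ℝ) ≤ xj - xk - Δ),
        mul_nonneg hw0 (by linarith : (0:ℝ) ≤ xj - xk - Δ),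
        mul_nonneg hw1' (by linarith : (0:ℝ) ≤ xi - xk - Δ)]
  · linarith
  · linarith
  · refine ⟨lt_abs.mpr (Or.inr ?_), lt_abs.mpr (Or.inr ?_)⟩ <;>
      nlinarith [mul_nonneg hw0 (by linarith : (0:ℝ) ≤ xk - xi - Δ),
        mul_nonneg hw1' (by linarith : (0:ℝ) ≤ xk - xj - Δ),
        mul_nonneg hw0 (by linarith : (0:ℝ) ≤ xk - xj - Δ),
        mul_nonneg hw1' (by linarith : (0:ℝ) ≤ xk - xi - Δ)]
end

section
/- For any solution m of the mean-field equation and any convex continuous h : [0,1] → ℝ, the quantity ⟨h, m(t)⟩ is non-increasing in t. -/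
/-!
An interaction moves particles at `x` and `y` to two convex combinations of `x` and `y`, so for `h`
convex on `[0, 1]` the integrand `h (w x + (1 - w) y) + h (w y + (1 - w) x) - h x - h y` is
nonpositive, and so is its integral against `m r ⊗ m r`. The equation writes
`⟨h, m t⟩ - ⟨h, m s⟩` as the time integral of this rate over `[s, t]`, provided the rate is a
measurable function of time. Applied to indicators, the equation itself shows that `m t E` is a
constant plus a primitive of a bounded function; such a primitive is measurable even where the
interval integral is undefined, so `t ↦ m t` is a Markov kernel and the rate is measurable.
-/

open MeasureTheory Set ProbabilityTheory

section Primitive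

variable {E : Type*} [NormedAddCommGroup E] {F : ℝ → E}

theorem ordConnected_setOf_intervalIntegrable (μ : Measure ℝ) (a : ℝ) :
    OrdConnected {b | IntervalIntegrable F μ a b} :=
  ⟨fun _ hb _ hc _ hx =>
    hb.trans ((hb.symm.trans hc).mono_set (uIcc_subset_uIcc_left (Icc_subset_uIcc hx)))⟩

theorem lipschitzOnWith_intervalIntegral [NormedSpace ℝ E] {B : ℝ} (hF : ∀ u, ‖F u‖ ≤ B) (a : ℝ) :
    LipschitzOnWith (Real.toNNReal B) (fun b => ∫ r in a..b, F r)
      {b | IntervalIntegrable F volume a b} := by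
  refine LipschitzOnWith.of_dist_le_mul fun c hc b hb => ?_
  have hB : 0 ≤ B := (norm_nonneg _).trans (hF 0)
  rw [dist_eq_norm, intervalIntegral.integral_interval_sub_left hc hb, Real.coe_toNNReal _ hB,
    Real.dist_eq]
  exact intervalIntegral.norm_integral_le_of_norm_le_const fun x _ => hF x

theorem measurable_intervalIntegral_of_norm_le [NormedSpace ℝ E] [MeasurableSpace E]
    [BorelSpace E] {B : ℝ} (hF : ∀ u, ‖F u‖ ≤ B) (a : ℝ) :
    Measurable fun b => ∫ r in a..b, F r := by
  classical
  set S := {b | IntervalIntegrable F volume a b}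
  have hpiecewise : (fun b => ∫ r in a..b, F r) = S.piecewise (fun b => ∫ r in a..b, F r) 0 := by
    funext b
    by_cases hb : b ∈ S
    · simp [hb]
    · simp [hb, intervalIntegral.integral_undef hb]
  rw [hpiecewise]
  exact (lipschitzOnWith_intervalIntegral hF a).continuousOn.measurable_piecewise
    continuousOn_const (ordConnected_setOf_intervalIntegrable volume a).measurableSet

end Primitive

section Collision

variable (Δ w : ℝ)

noncomputable def collisionIntegrand (h : ℝ → ℝ) (x y : ℝ) : ℝ :=
  if |x - y| ≤ Δ then h (w * x + (1 - w) * y) + h (w * y + (1 - w) * x) - h x - h y else 0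

noncomputable def collisionRate (h : ℝ → ℝ) (μ : Measure ℝ) : ℝ :=
  ∫ x, ∫ y, collisionIntegrand Δ w h x y ∂μ ∂μ

variable {Δ w} {h : ℝ → ℝ}

theorem abs_collisionIntegrand_le {C : ℝ} (hC : ∀ u, |h u| ≤ C) (x y : ℝ) :
    |collisionIntegrand Δ w h x y| ≤ 4 * C := by
  have hC0 : 0 ≤ C := (abs_nonneg _).trans (hC 0)
  unfold collisionIntegrand
  split_ifs
  · have := hC (w * x + (1 - w) * y)
    have := hC (w * y + (1 - w) * x)
    have := hC x
    have := hC y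
    rw [abs_le] at *
    constructor <;> linarith
  · simpa using hC0

theorem abs_collisionRate_le {C : ℝ} (hC : ∀ u, |h u| ≤ C) (μ : Measure ℝ)
    [IsProbabilityMeasure μ] : |collisionRate Δ w h μ| ≤ 4 * C := by
  have hinner (x : ℝ) : ‖∫ y, collisionIntegrand Δ w h x y ∂μ‖ ≤ 4 * C := by
    simpa using norm_integral_le_of_norm_le_const (μ := μ)
      (ae_of_all _ fun y => (Real.norm_eq_abs _).trans_le (abs_collisionIntegrand_le hC x y))
  simpa [collisionRate] using norm_integral_le_of_norm_le_const (μ := μ) (ae_of_all _ hinner)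

theorem collisionIntegrand_nonpos {s : Set ℝ} (hconv : ConvexOn ℝ s h) (hw₀ : 0 ≤ w)
    (hw₁ : w ≤ 1) {x y : ℝ} (hx : x ∈ s) (hy : y ∈ s) : collisionIntegrand Δ w h x y ≤ 0 := by
  unfold collisionIntegrand
  split_ifs
  · have hxy := hconv.2 hx hy hw₀ (sub_nonneg.2 hw₁) (add_sub_cancel w 1)
    have hyx := hconv.2 hy hx hw₀ (sub_nonneg.2 hw₁) (add_sub_cancel w 1)
    simp only [smul_eq_mul] at hxy hyx
    linarith
  · exact le_rfl

theorem collisionRate_nonpos {s : Set ℝ} (hconv : ConvexOn ℝ s h) (hw₀ : 0 ≤ w) (hw₁ : w ≤ 1)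
    {μ : Measure ℝ} (hμ : ∀ᵐ x ∂μ, x ∈ s) : collisionRate Δ w h μ ≤ 0 :=
  integral_nonpos_of_ae <| hμ.mono fun _ hx => integral_nonpos_of_ae <|
    hμ.mono fun _ hy => collisionIntegrand_nonpos hconv hw₀ hw₁ hx hy

theorem measurable_collisionIntegrand (hh : Measurable h) :
    Measurable (Function.uncurry (collisionIntegrand Δ w h)) := by
  refine Measurable.ite (measurableSet_le (by fun_prop) measurable_const) ?_ measurable_const
  exact (((hh.comp (by fun_prop)).add (hh.comp (by fun_prop))).sub
    (hh.comp measurable_fst)).sub (hh.comp measurable_snd)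

theorem measurable_collisionRate {T : Type*} [MeasurableSpace T] {M : T → Measure ℝ}
    (hM : Measurable M) [∀ u, IsProbabilityMeasure (M u)] (hh : Measurable h) :
    Measurable fun u => collisionRate Δ w h (M u) := by
  let κ : Kernel T ℝ := ⟨M, hM⟩
  let κ₂ : Kernel (T × ℝ) ℝ := ⟨fun q => M q.1, hM.comp measurable_fst⟩
  have : IsMarkovKernel κ := ⟨fun u => inferInstanceAs (IsProbabilityMeasure (M u))⟩
  have : IsMarkovKernel κ₂ := ⟨fun q => inferInstanceAs (IsProbabilityMeasure (M q.1))⟩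
  have hinner : StronglyMeasurable fun q : T × ℝ => ∫ y, collisionIntegrand Δ w h q.2 y ∂κ₂ q :=
    ((measurable_collisionIntegrand hh).comp
      (measurable_fst.snd.prodMk measurable_snd)).stronglyMeasurable.integral_kernel_prod_right'
  exact (hinner.integral_kernel_prod_right' (κ := κ)).measurable

end Collision

def SolvesCollisionEquation (Δ w : ℝ) (m : ℝ → Measure ℝ) : Prop :=
  ∀ h : ℝ → ℝ, Measurable h → (∃ C, ∀ u, |h u| ≤ C) → ∀ t : ℝ, 0 ≤ t →
    (∫ x, h x ∂m t) - (∫ x, h x ∂m 0) = ∫ s in (0:ℝ)..t, collisionRate Δ w h (m s)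

namespace SolvesCollisionEquation

variable {Δ w : ℝ} {m : ℝ → Measure ℝ} [∀ t, IsProbabilityMeasure (m t)]

theorem measurable_comp_max (hm : SolvesCollisionEquation Δ w m) :
    Measurable fun u => m (max u 0) := by
  refine Measure.measurable_of_measurable_coe _ fun E hE => ?_
  have hbound (u : ℝ) : |E.indicator 1 u| ≤ (1 : ℝ) := by
    simpa using norm_indicator_le_norm_self (s := E) (f := (1 : ℝ → ℝ)) (a := u)
  have hmass (u : ℝ) : m (max u 0) E = ENNReal.ofReal ((m 0).real E +
      ∫ r in (0:ℝ)..max u 0, collisionRate Δ w (E.indicator 1) (m r)) := by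
    have := hm _ (measurable_one.indicator hE) ⟨1, hbound⟩ _ (le_max_right u 0)
    rw [integral_indicator_one hE, integral_indicator_one hE] at this
    rw [← this, add_sub_cancel, measureReal_def, ENNReal.ofReal_toReal (measure_ne_top _ _)]
  simp_rw [hmass]
  exact (measurable_const.add ((measurable_intervalIntegral_of_norm_le
    (fun r => abs_collisionRate_le hbound (m r)) 0).comp
      (measurable_id.max measurable_const))).ennreal_ofReal

theorem integral_sub_integral (hm : SolvesCollisionEquation Δ w m) {h : ℝ → ℝ}
    (hh : Measurable h) {C : ℝ} (hC : ∀ u, |h u| ≤ C) {s t : ℝ} (hs : 0 ≤ s) (hst : s ≤ t) :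
    (∫ x, h x ∂m t) - ∫ x, h x ∂m s = ∫ r in s..t, collisionRate Δ w h (m r) := by
  set f := fun r => collisionRate Δ w h (m (max r 0))
  have hf_int (a b : ℝ) : IntervalIntegrable f volume a b :=
    (intervalIntegrable_const (c := 4 * C)).mono_fun'
      (measurable_collisionRate hm.measurable_comp_max hh).aestronglyMeasurable
      (ae_of_all _ fun r => abs_collisionRate_le hC _)
  have hf_eq {a b : ℝ} (ha : 0 ≤ a) (hb : 0 ≤ b) :
      ∫ r in a..b, collisionRate Δ w h (m r) = ∫ r in a..b, f r :=
    intervalIntegral.integral_congr fun r hr => by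
      simp only [f, max_eq_left ((le_min ha hb).trans hr.1)]
  have ht := hs.trans hst
  rw [hf_eq hs ht, ← intervalIntegral.integral_interval_sub_left (hf_int 0 t) (hf_int 0 s),
    ← hf_eq le_rfl ht, ← hf_eq le_rfl hs, ← hm h hh ⟨C, hC⟩ t ht, ← hm h hh ⟨C, hC⟩ s hs]
  ring

theorem integral_le_of_convexOn (hm : SolvesCollisionEquation Δ w m) (hw₀ : 0 ≤ w) (hw₁ : w ≤ 1)
    (hsupp : ∀ t, ∀ᵐ x ∂m t, x ∈ Icc (0:ℝ) 1) {h : ℝ → ℝ} (hconv : ConvexOn ℝ (Icc 0 1) h)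
    (hh : Measurable h) {C : ℝ} (hC : ∀ u, |h u| ≤ C) {s t : ℝ} (hs : 0 ≤ s) (hst : s ≤ t) :
    ∫ x, h x ∂m t ≤ ∫ x, h x ∂m s := by
  rw [← sub_nonpos, hm.integral_sub_integral hh hC hs hst, intervalIntegral.integral_of_le hst]
  exact integral_nonpos fun r => collisionRate_nonpos hconv hw₀ hw₁ (hsupp r)

end SolvesCollisionEquation

theorem convex_functional_nonincreasing_general (Δ w : ℝ)
    (hw : w ∈ Set.Ioo (0:ℝ) 1)
    (m : ℝ → Measure ℝ)
    (hprob : ∀ t, IsProbabilityMeasure (m t))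
    (hsupp : ∀ t, m t (Set.Icc (0:ℝ) 1)ᶜ = 0)
    (heq : ∀ h : ℝ → ℝ, Measurable h → (∃ C, ∀ u, |h u| ≤ C) →
      ∀ t : ℝ, 0 ≤ t →
        (∫ x, h x ∂ m t) - (∫ x, h x ∂ m 0) =
          ∫ s in (0:ℝ)..t, ∫ x, (∫ y,
            (if |x - y| ≤ Δ then
              h (w * x + (1 - w) * y) + h (w * y + (1 - w) * x) - h x - h y
            else 0) ∂ m s) ∂ m s) :
    ∀ h : ℝ → ℝ, ConvexOn ℝ (Set.Icc (0:ℝ) 1) h →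
      ContinuousOn h (Set.Icc (0:ℝ) 1) →
      ∀ s t : ℝ, 0 ≤ s → s ≤ t →
        (∫ x, h x ∂ m t) ≤ ∫ x, h x ∂ m s := by
  intro h hconv hcont s t hs hst
  set g := IccExtend zero_le_one ((Icc (0:ℝ) 1).domRestrict h)
  have hgh : EqOn g h (Icc 0 1) := fun x hx => IccExtend_of_mem _ _ hx
  have hsupp' (t : ℝ) : ∀ᵐ x ∂m t, x ∈ Icc (0:ℝ) 1 := mem_ae_iff.2 (hsupp t)
  have hint (r : ℝ) : ∫ x, h x ∂m r = ∫ x, g x ∂m r :=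
    integral_congr_ae ((hsupp' r).mono fun x hx => (hgh hx).symm)
  obtain ⟨C, hC⟩ := isCompact_Icc.exists_bound_of_continuousOn hcont
  have hgC (u : ℝ) : |g u| ≤ C := hC _ (projIcc 0 1 zero_le_one u).2
  rw [hint, hint]
  exact SolvesCollisionEquation.integral_le_of_convexOn heq hw.1.le hw.2.le hsupp'
    (hconv.congr hgh.symm) hcont.domRestrict.Icc_extend'.measurable hgC hs hst

theorem convex_functional_nonincreasing (Δ w : ℝ) (hΔ : Δ ∈ Set.Ioc (0:ℝ) 1)
    (hw : w ∈ Set.Ioo (0:ℝ) 1)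
    (m : ℝ → Measure ℝ)
    (hprob : ∀ t, IsProbabilityMeasure (m t))
    (hsupp : ∀ t, m t (Set.Icc (0:ℝ) 1)ᶜ = 0)
    (heq : ∀ h : ℝ → ℝ, Measurable h → (∃ C, ∀ u, |h u| ≤ C) →
      ∀ t : ℝ, 0 ≤ t →
        (∫ x, h x ∂ m t) - (∫ x, h x ∂ m 0) =
          ∫ s in (0:ℝ)..t, ∫ x, (∫ y,
            (if |x - y| ≤ Δ then
              h (w * x + (1 - w) * y) + h (w * y + (1 - w) * x) - h x - h y
            else 0) ∂ m s) ∂ m s) :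
    ∀ h : ℝ → ℝ, ConvexOn ℝ (Set.Icc (0:ℝ) 1) h →
      ContinuousOn h (Set.Icc (0:ℝ) 1) →
      ∀ s t : ℝ, 0 ≤ s → s ≤ t →
        (∫ x, h x ∂ m t) ≤ ∫ x, h x ∂ m s :=
  convex_functional_nonincreasing_general Δ w hw m hprob hsupp heq
end

section
/- Standard deviation lower bound for the mean-field equation: the variance σ(t)² = ∫x² m(t)(dx) - (∫x m(t)(dx))² satisfies σ(0)² ≥ σ(t)² ≥ σ(0)²·e^{-8w(1-w)t} for all t ≥ 0 (so σ(t) ≥ σ(0)·e^{-4w(1-w)t}). -/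
open MeasureTheory Real

namespace StddevAux

open Set

noncomputable def cl (x : ℝ) : ℝ := max 0 (min x 1)

lemma cl_cont : Continuous cl := continuous_const.max (continuous_id.min continuous_const)
lemma cl_meas : Measurable cl := cl_cont.measurable
lemma cl_nonneg (x : ℝ) : 0 ≤ cl x := le_max_left _ _
lemma cl_le_one (x : ℝ) : cl x ≤ 1 := max_le zero_le_one (min_le_right _ _)
lemma cl_abs (x : ℝ) : |cl x| ≤ 1 := abs_le.2 ⟨by linarith [cl_nonneg x], cl_le_one x⟩
lemma cl_eq {x : ℝ} (hx : x ∈ Icc (0:ℝ) 1) : cl x = x := by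
  unfold cl; rw [min_eq_left hx.2, max_eq_right hx.1]

noncomputable def clsq (x : ℝ) : ℝ := (cl x) ^ 2

lemma clsq_meas : Measurable clsq := cl_meas.pow_const 2
lemma clsq_nonneg (x : ℝ) : 0 ≤ clsq x := sq_nonneg _
lemma clsq_le_one (x : ℝ) : clsq x ≤ 1 := by
  have := cl_nonneg x; have := cl_le_one x
  unfold clsq; nlinarith
lemma clsq_abs (x : ℝ) : |clsq x| ≤ 1 := abs_le.2 ⟨by linarith [clsq_nonneg x], clsq_le_one x⟩
lemma clsq_eq {x : ℝ} (hx : x ∈ Icc (0:ℝ) 1) : clsq x = x ^ 2 := by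
  unfold clsq; rw [cl_eq hx]

lemma combo_mem {w x y : ℝ} (hw0 : 0 < w) (hw1 : w < 1)
    (hx : x ∈ Icc (0:ℝ) 1) (hy : y ∈ Icc (0:ℝ) 1) :
    w * x + (1 - w) * y ∈ Icc (0:ℝ) 1 := by
  obtain ⟨hx0, hx1⟩ := hx; obtain ⟨hy0, hy1⟩ := hy
  constructor <;> nlinarith

variable {ν : Measure ℝ}

lemma ae01 (h0 : ν (Icc (0:ℝ) 1)ᶜ = 0) : ∀ᵐ x ∂ν, x ∈ Icc (0:ℝ) 1 := by
  rw [ae_iff]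
  simpa [Set.compl_def] using h0

lemma int_bdd [IsProbabilityMeasure ν] {f : ℝ → ℝ} (hm : AEStronglyMeasurable f ν) {C : ℝ}
    (hb : ∀ᵐ x ∂ν, |f x| ≤ C) : Integrable f ν :=
  ⟨hm, HasFiniteIntegral.of_bounded (by simpa [Real.norm_eq_abs] using hb)⟩

lemma int_id [IsProbabilityMeasure ν] (h0 : ν (Icc (0:ℝ) 1)ᶜ = 0) :
    Integrable (fun x : ℝ => x) ν :=
  int_bdd (C := 1) measurable_id.aestronglyMeasurable
    ((ae01 h0).mono fun x hx => abs_le.2 ⟨by linarith [hx.1], hx.2⟩)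

lemma int_sq [IsProbabilityMeasure ν] (h0 : ν (Icc (0:ℝ) 1)ᶜ = 0) :
    Integrable (fun x : ℝ => x ^ 2) ν :=
  int_bdd (C := 1) (measurable_id.pow_const 2).aestronglyMeasurable
    ((ae01 h0).mono fun x hx => abs_le.2 ⟨by nlinarith [hx.1, hx.2], by nlinarith [hx.1, hx.2]⟩)

lemma quad_integral [IsProbabilityMeasure ν] (h0 : ν (Icc (0:ℝ) 1)ᶜ = 0) (b c : ℝ) :
    ∫ y, (y ^ 2 + b * y + c) ∂ν = (∫ y, y ^ 2 ∂ν) + b * (∫ y, y ∂ν) + c := by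
  have h2 : Integrable (fun y : ℝ => b * y) ν := (int_id h0).const_mul b
  have h1 : Integrable (fun y : ℝ => y ^ 2 + b * y) ν := (int_sq h0).add h2
  rw [integral_add h1 (integrable_const c), integral_add (int_sq h0) h2, integral_const_mul,
      integral_const]
  simp

lemma mean_mem [IsProbabilityMeasure ν] (h0 : ν (Icc (0:ℝ) 1)ᶜ = 0) :
    (∫ x, x ∂ν) ∈ Icc (0:ℝ) 1 := by
  constructor
  · exact integral_nonneg_of_ae ((ae01 h0).mono fun x hx => hx.1)
  · calc ∫ x, x ∂ν ≤ ∫ _, (1:ℝ) ∂ν :=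
          integral_mono_ae (int_id h0) (integrable_const 1) ((ae01 h0).mono fun x hx => hx.2)
      _ = 1 := by simp

lemma m2_mem [IsProbabilityMeasure ν] (h0 : ν (Icc (0:ℝ) 1)ᶜ = 0) :
    (∫ x, x ^ 2 ∂ν) ∈ Icc (0:ℝ) 1 := by
  constructor
  · exact integral_nonneg_of_ae ((ae01 h0).mono fun x _ => sq_nonneg x)
  · calc ∫ x, x ^ 2 ∂ν ≤ ∫ _, (1:ℝ) ∂ν :=
          integral_mono_ae (int_sq h0) (integrable_const 1)
            ((ae01 h0).mono fun x hx => by dsimp only; nlinarith [hx.1, hx.2])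
      _ = 1 := by simp

lemma var_nonneg [IsProbabilityMeasure ν] (h0 : ν (Icc (0:ℝ) 1)ᶜ = 0) :
    (∫ x, x ∂ν) ^ 2 ≤ ∫ x, x ^ 2 ∂ν := by
  set μ1 := ∫ x, x ∂ν with hμ1
  have h1 : (0:ℝ) ≤ ∫ x, (x ^ 2 + (-(2 * μ1)) * x + μ1 ^ 2) ∂ν := by
    apply integral_nonneg
    intro x
    dsimp only [Pi.zero_apply]
    nlinarith [sq_nonneg (x - μ1)]
  rw [quad_integral h0] at h1
  nlinarith [h1]

lemma gronwall_discrete (v : ℝ → ℝ) (a T : ℝ) (ha : 0 ≤ a) (hT : 0 ≤ T)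
    (hpos : 0 ≤ v 0)
    (hstep : ∀ u1 u2, 0 ≤ u1 → u1 ≤ u2 → u2 ≤ T → v u1 - a * (u2 - u1) * v u1 ≤ v u2) :
    v 0 * Real.exp (-(a * T)) ≤ v T := by
  have key : ∀ n : ℕ, 0 < n → a * T ≤ n → v 0 * (1 + (-(a * T)) / n) ^ n ≤ v T := by
    intro n hn hna
    have hn' : (0:ℝ) < n := by exact_mod_cast hn
    have hr : (0:ℝ) ≤ 1 + (-(a * T)) / n := by
      rw [neg_div]
      have : a * T / n ≤ 1 := by
        rw [div_le_one hn']; exact hna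
      linarith
    have hmem : ∀ k : ℕ, k ≤ n → (0:ℝ) ≤ (k : ℝ) * (T / n) ∧ (k : ℝ) * (T / n) ≤ T := by
      intro k hk
      have hk' : (k:ℝ) ≤ n := by exact_mod_cast hk
      constructor
      · positivity
      · calc (k:ℝ) * (T / n) ≤ (n:ℝ) * (T / n) := by
              apply mul_le_mul_of_nonneg_right hk' (by positivity)
          _ = T := by field_simp
    have main : ∀ k : ℕ, k ≤ n → v 0 * (1 + (-(a * T)) / n) ^ k ≤ v ((k : ℝ) * (T / n)) := by
      intro k
      induction k with
      | zero => intro _; simp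
      | succ k ih =>
        intro hk1
        have hk : k ≤ n := Nat.le_of_succ_le hk1
        have ihk := ih hk
        have h1 := (hmem k hk).1
        have h2 : (k:ℝ) * (T / n) ≤ ((k+1:ℕ) : ℝ) * (T / n) := by
          push_cast
          have : (0:ℝ) ≤ T / n := by positivity
          nlinarith
        have h3 := (hmem (k+1) hk1).2
        have hst := hstep ((k:ℝ) * (T / n)) (((k+1:ℕ):ℝ) * (T / n)) h1 h2 h3
        have hdiff : ((k+1:ℕ):ℝ) * (T / n) - (k:ℝ) * (T / n) = T / n := by
          push_cast; ring
        rw [hdiff] at hst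
        have hrv : (1 + (-(a * T)) / n) * v ((k:ℝ) * (T / n)) ≤ v (((k+1:ℕ):ℝ) * (T / n)) := by
          have : v ((k:ℝ) * (T / n)) - a * (T / n) * v ((k:ℝ) * (T / n))
              = (1 + (-(a * T)) / n) * v ((k:ℝ) * (T / n)) := by
            field_simp
            ring
          linarith [hst, this.symm.le, this.le]
        calc v 0 * (1 + (-(a * T)) / n) ^ (k + 1)
            = (1 + (-(a * T)) / n) * (v 0 * (1 + (-(a * T)) / n) ^ k) := by ring
          _ ≤ (1 + (-(a * T)) / n) * v ((k:ℝ) * (T / n)) :=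
              mul_le_mul_of_nonneg_left ihk hr
          _ ≤ v (((k+1:ℕ):ℝ) * (T / n)) := hrv
    have hfin := main n le_rfl
    have : (n:ℝ) * (T / n) = T := by field_simp
    rwa [this] at hfin
  have hlim : Filter.Tendsto (fun n : ℕ => v 0 * (1 + (-(a * T)) / n) ^ n)
      Filter.atTop (nhds (v 0 * Real.exp (-(a * T)))) :=
    (Real.tendsto_one_add_div_pow_exp (-(a * T))).const_mul _
  refine le_of_tendsto hlim ?_
  filter_upwards [Filter.eventually_ge_atTop (max 1 ⌈a * T⌉₊)] with n hn
  have h1 : 0 < n := lt_of_lt_of_le one_pos (le_trans (le_max_left _ _) hn)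
  have h2 : a * T ≤ n := by
    calc a * T ≤ (⌈a * T⌉₊ : ℝ) := Nat.le_ceil _
      _ ≤ n := by exact_mod_cast le_trans (le_max_right _ _) hn
  exact key n h1 h2

lemma clsq_cont : Continuous clsq := cl_cont.pow 2

lemma psi_abs (Δ w x y : ℝ) :
    |if |x - y| ≤ Δ then clsq (w * x + (1 - w) * y) + clsq (w * y + (1 - w) * x)
        - clsq x - clsq y else 0| ≤ 4 := by
  split_ifs with hd
  · refine abs_le.2 ⟨?_, ?_⟩ <;>
      linarith [clsq_nonneg (w * x + (1 - w) * y), clsq_nonneg (w * y + (1 - w) * x),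
        clsq_le_one x, clsq_le_one y, clsq_nonneg x, clsq_nonneg y,
        clsq_le_one (w * x + (1 - w) * y), clsq_le_one (w * y + (1 - w) * x)]
  · simp

end StddevAux

open StddevAux in
theorem stddev_bounds (Δ w : ℝ) (hΔ : Δ ∈ Set.Ioc (0:ℝ) 1)
    (hw : w ∈ Set.Ioo (0:ℝ) 1)
    (m : ℝ → Measure ℝ)
    (hprob : ∀ t, IsProbabilityMeasure (m t))
    (hsupp : ∀ t, m t (Set.Icc (0:ℝ) 1)ᶜ = 0)
    (heq : ∀ h : ℝ → ℝ, Measurable h → (∃ C, ∀ u, |h u| ≤ C) →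
      ∀ t : ℝ, 0 ≤ t →
        (∫ x, h x ∂ m t) - (∫ x, h x ∂ m 0) =
          ∫ s in (0:ℝ)..t, ∫ x, (∫ y,
            (if |x - y| ≤ Δ then
              h (w * x + (1 - w) * y) + h (w * y + (1 - w) * x) - h x - h y
            else 0) ∂ m s) ∂ m s)
    (var : ℝ → ℝ)
    (hvar : ∀ t, var t = (∫ x, x ^ 2 ∂ m t) - (∫ x, x ∂ m t) ^ 2) :
    ∀ t : ℝ, 0 ≤ t →
      var t ≤ var 0 ∧ var 0 * exp (-(8 * w * (1 - w) * t)) ≤ var t := by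
  obtain ⟨hΔ0, hΔ1⟩ := hΔ
  obtain ⟨hw0, hw1⟩ := hw
  have hclq : ∀ t, ∫ x, cl x ∂ m t = ∫ x, x ∂ m t := by
    intro t
    haveI := hprob t
    exact integral_congr_ae ((ae01 (hsupp t)).mono fun x hx => cl_eq hx)
  have hcl2q : ∀ t, ∫ x, clsq x ∂ m t = ∫ x, x ^ 2 ∂ m t := by
    intro t
    haveI := hprob t
    exact integral_congr_ae ((ae01 (hsupp t)).mono fun x hx => clsq_eq hx)
  -- the mean is constant in time
  have hμ : ∀ t, 0 ≤ t → ∫ x, x ∂ m t = ∫ x, x ∂ m 0 := by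
    intro t ht
    have h := heq cl cl_meas ⟨1, cl_abs⟩ t ht
    rw [hclq t, hclq 0] at h
    have hz : ∀ s : ℝ, (∫ x, (∫ y,
        (if |x - y| ≤ Δ then
          cl (w * x + (1 - w) * y) + cl (w * y + (1 - w) * x) - cl x - cl y
        else 0) ∂ m s) ∂ m s) = 0 := by
      intro s
      haveI := hprob s
      apply integral_eq_zero_of_ae
      filter_upwards [ae01 (hsupp s)] with x hx
      simp only [Pi.zero_apply]
      apply integral_eq_zero_of_ae
      filter_upwards [ae01 (hsupp s)] with y hy
      simp only [Pi.zero_apply]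
      split_ifs with hd
      · rw [cl_eq (combo_mem hw0 hw1 hx hy), cl_eq (combo_mem hw0 hw1 hy hx),
            cl_eq hx, cl_eq hy]
        ring
      · rfl
    simp only [hz, intervalIntegral.integral_zero] at h
    linarith
  -- evolution of second moment
  set K : ℝ → ℝ := fun s => ∫ x, (∫ y,
      (if |x - y| ≤ Δ then
        clsq (w * x + (1 - w) * y) + clsq (w * y + (1 - w) * x) - clsq x - clsq y
      else 0) ∂ m s) ∂ m s with hKdef
  have hvv : ∀ u : ℝ, 0 ≤ u → var u = var 0 + ∫ s in (0:ℝ)..u, K s := by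
    intro u hu
    have h := heq clsq clsq_meas ⟨1, clsq_abs⟩ u hu
    rw [hcl2q u, hcl2q 0] at h
    rw [← hKdef] at h
    rw [hvar u, hvar 0, hμ u hu]
    linarith
  -- pointwise upper bound on K
  have hKle : ∀ s : ℝ, K s ≤ 0 := by
    intro s
    haveI := hprob s
    simp only [hKdef]
    apply integral_nonpos_of_ae
    filter_upwards [ae01 (hsupp s)] with x hx
    simp only [Pi.zero_apply]
    apply integral_nonpos_of_ae
    filter_upwards [ae01 (hsupp s)] with y hy
    simp only [Pi.zero_apply]
    split_ifs with hd
    · rw [clsq_eq (combo_mem hw0 hw1 hx hy), clsq_eq (combo_mem hw0 hw1 hy hx),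
          clsq_eq hx, clsq_eq hy]
      nlinarith [sq_nonneg (x - y), mul_pos hw0 (by linarith : (0:ℝ) < 1 - w)]
    · exact le_refl 0
  -- pointwise lower bound on K
  have hKge : ∀ s : ℝ, -(8 * (w * (1 - w))) * ((∫ x, x ^ 2 ∂ m s) - (∫ x, x ∂ m s) ^ 2)
      ≤ K s := by
    intro s
    haveI := hprob s
    simp only [hKdef]
    have hc'0 : (0:ℝ) < w * (1 - w) := mul_pos hw0 (by linarith)
    set μ1 := ∫ x, x ∂ m s with hμ1
    set M2 := ∫ x, x ^ 2 ∂ m s with hM2'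
    -- the inner integral as a function of x is strongly measurable
    have hψm : Measurable (fun p : ℝ × ℝ =>
        if |p.1 - p.2| ≤ Δ then
          clsq (w * p.1 + (1 - w) * p.2) + clsq (w * p.2 + (1 - w) * p.1)
            - clsq p.1 - clsq p.2
        else 0) := by
      apply Measurable.ite
      · exact measurableSet_le (continuous_abs.comp (continuous_fst.sub continuous_snd)).measurable
          measurable_const
      · apply Continuous.measurable
        exact (((clsq_cont.comp ((continuous_const.mul continuous_fst).add
            ((continuous_const.mul continuous_snd)))).add
          (clsq_cont.comp ((continuous_const.mul continuous_snd).add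
            ((continuous_const.mul continuous_fst))))).sub
          (clsq_cont.comp continuous_fst)).sub (clsq_cont.comp continuous_snd)
      · exact measurable_const
    have hI2sm : StronglyMeasurable (fun x : ℝ => ∫ y,
        (if |x - y| ≤ Δ then
          clsq (w * x + (1 - w) * y) + clsq (w * y + (1 - w) * x) - clsq x - clsq y
        else 0) ∂ m s) :=
      hψm.stronglyMeasurable.integral_prod_right'
    have hinner_bd : ∀ x : ℝ, |∫ y,
        (if |x - y| ≤ Δ then
          clsq (w * x + (1 - w) * y) + clsq (w * y + (1 - w) * x) - clsq x - clsq y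
        else 0) ∂ m s| ≤ 4 := by
      intro x
      have hb := norm_integral_le_of_norm_le_const (μ := m s) (C := 4)
        (f := fun y : ℝ => if |x - y| ≤ Δ then
          clsq (w * x + (1 - w) * y) + clsq (w * y + (1 - w) * x) - clsq x - clsq y
        else 0)
        (Filter.Eventually.of_forall fun y => by
          rw [Real.norm_eq_abs]; exact psi_abs Δ w x y)
      simpa [Real.norm_eq_abs, measure_univ] using hb
    have hI2int : Integrable (fun x : ℝ => ∫ y,
        (if |x - y| ≤ Δ then
          clsq (w * x + (1 - w) * y) + clsq (w * y + (1 - w) * x) - clsq x - clsq y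
        else 0) ∂ m s) (m s) :=
      int_bdd hI2sm.aestronglyMeasurable (Filter.Eventually.of_forall hinner_bd)
    have hquadint : Integrable (fun x : ℝ => x ^ 2 + -(2 * μ1) * x + M2) (m s) := by
      exact ((int_sq (hsupp s)).add ((int_id (hsupp s)).const_mul _)).add (integrable_const _)
    have hJint : Integrable
        (fun x : ℝ => -(2 * (w * (1 - w))) * (x ^ 2 + -(2 * μ1) * x + M2)) (m s) :=
      hquadint.const_mul _
    -- a.e. lower bound for the inner integral
    have step1 : ∀ᵐ x ∂ m s, -(2 * (w * (1 - w))) * (x ^ 2 + -(2 * μ1) * x + M2) ≤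
        ∫ y, (if |x - y| ≤ Δ then
          clsq (w * x + (1 - w) * y) + clsq (w * y + (1 - w) * x) - clsq x - clsq y
        else 0) ∂ m s := by
      filter_upwards [ae01 (hsupp s)] with x hx
      have hxle : ∫ y, (-(2 * (w * (1 - w))) * (x - y) ^ 2) ∂ m s ≤
          ∫ y, (if |x - y| ≤ Δ then
            clsq (w * x + (1 - w) * y) + clsq (w * y + (1 - w) * x) - clsq x - clsq y
          else 0) ∂ m s := by
        apply integral_mono_ae
        · apply int_bdd (C := 2 * (w * (1 - w)))
          · exact (Continuous.measurable (by
              exact continuous_const.mul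
                ((continuous_const.sub continuous_id).pow 2))).aestronglyMeasurable
          · filter_upwards [ae01 (hsupp s)] with y hy
            rw [abs_mul, abs_neg, abs_of_nonneg (by linarith : (0:ℝ) ≤ 2 * (w * (1 - w)))]
            have hsq : |(x - y) ^ 2| ≤ 1 := by
              rw [abs_of_nonneg (sq_nonneg _)]
              nlinarith [hx.1, hx.2, hy.1, hy.2]
            nlinarith [hsq, hc'0]
        · apply int_bdd (C := 4)
          · apply Measurable.aestronglyMeasurable
            apply Measurable.ite
            · exact measurableSet_le
                (continuous_abs.comp (continuous_const.sub continuous_id)).measurable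
                measurable_const
            · apply Continuous.measurable
              exact (((clsq_cont.comp (continuous_const.add
                  (continuous_const.mul continuous_id))).add
                (clsq_cont.comp ((continuous_const.mul continuous_id).add
                  continuous_const))).sub continuous_const).sub clsq_cont
            · exact measurable_const
          · exact Filter.Eventually.of_forall fun y => psi_abs Δ w x y
        · filter_upwards [ae01 (hsupp s)] with y hy
          split_ifs with hd
          · rw [clsq_eq (combo_mem hw0 hw1 hx hy), clsq_eq (combo_mem hw0 hw1 hy hx),
                clsq_eq hx, clsq_eq hy]
            have hid : (w * x + (1 - w) * y) ^ 2 + (w * y + (1 - w) * x) ^ 2 - x ^ 2 - y ^ 2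
                = -(2 * (w * (1 - w))) * (x - y) ^ 2 := by ring
            linarith [hid.ge]
          · nlinarith [sq_nonneg (x - y), hc'0]
      have heval : ∫ y, (-(2 * (w * (1 - w))) * (x - y) ^ 2) ∂ m s =
          -(2 * (w * (1 - w))) * (x ^ 2 + -(2 * μ1) * x + M2) := by
        rw [integral_const_mul]
        congr 1
        have hfe : (fun y : ℝ => (x - y) ^ 2) = fun y : ℝ => y ^ 2 + -(2 * x) * y + x ^ 2 := by
          funext y; ring
        rw [hfe, quad_integral (hsupp s), ← hμ1, ← hM2']
        ring
      linarith [hxle, heval.ge, heval.le]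
    have hfinal : ∫ x, (-(2 * (w * (1 - w))) * (x ^ 2 + -(2 * μ1) * x + M2)) ∂ m s ≤
        ∫ x, (∫ y, (if |x - y| ≤ Δ then
          clsq (w * x + (1 - w) * y) + clsq (w * y + (1 - w) * x) - clsq x - clsq y
        else 0) ∂ m s) ∂ m s :=
      integral_mono_ae hJint hI2int step1
    have heval2 : ∫ x, (-(2 * (w * (1 - w))) * (x ^ 2 + -(2 * μ1) * x + M2)) ∂ m s =
        -(2 * (w * (1 - w))) * (M2 + -(2 * μ1) * μ1 + M2) := by
      rw [integral_const_mul, quad_integral (hsupp s), ← hμ1, ← hM2']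
    have hvge : μ1 ^ 2 ≤ M2 := var_nonneg (hsupp s)
    nlinarith [hfinal, heval2.le, heval2.ge, hc'0, hvge]
  -- main argument
  have hv00 : 0 ≤ var 0 := by
    haveI := hprob 0
    rw [hvar 0]
    linarith [var_nonneg (hsupp 0)]
  intro T hT
  by_cases hint : IntervalIntegrable K MeasureTheory.volume 0 T
  · -- integrable case
    have hsubint : ∀ u1 u2, 0 ≤ u1 → u2 ≤ T → u1 ≤ u2 →
        IntervalIntegrable K MeasureTheory.volume u1 u2 := by
      intro u1 u2 h1 h2 h12
      apply hint.mono_set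
      rw [Set.uIcc_of_le h12, Set.uIcc_of_le hT]
      exact Set.Icc_subset_Icc h1 h2
    have hdec : ∀ u1 u2, 0 ≤ u1 → u1 ≤ u2 → u2 ≤ T → var u2 ≤ var u1 := by
      intro u1 u2 h1 h12 h2
      have hi1 := hsubint 0 u1 le_rfl (le_trans h12 h2) h1
      have hi2 := hsubint 0 u2 le_rfl h2 (le_trans h1 h12)
      have hi12 := hsubint u1 u2 h1 h2 h12
      have hd := intervalIntegral.integral_interval_sub_left hi2 hi1
      have hle : ∫ s in u1..u2, K s ≤ ∫ _ in u1..u2, (0:ℝ) :=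
        intervalIntegral.integral_mono_on h12 hi12 intervalIntegrable_const
          (fun s _ => hKle s)
      rw [intervalIntegral.integral_zero] at hle
      rw [hvv u1 h1, hvv u2 (le_trans h1 h12)]
      linarith
    have hstep : ∀ u1 u2, 0 ≤ u1 → u1 ≤ u2 → u2 ≤ T →
        var u1 - (8 * (w * (1 - w))) * (u2 - u1) * var u1 ≤ var u2 := by
      intro u1 u2 h1 h12 h2
      have hi1 := hsubint 0 u1 le_rfl (le_trans h12 h2) h1
      have hi2 := hsubint 0 u2 le_rfl h2 (le_trans h1 h12)
      have hi12 := hsubint u1 u2 h1 h2 h12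
      have hd := intervalIntegral.integral_interval_sub_left hi2 hi1
      have e12 : var u2 - var u1 = ∫ s in u1..u2, K s := by
        rw [hvv u1 h1, hvv u2 (le_trans h1 h12)]
        linarith
      have hlb : ∫ _ in u1..u2, (-(8 * (w * (1 - w)) * var u1)) ≤ ∫ s in u1..u2, K s := by
        apply intervalIntegral.integral_mono_on h12 intervalIntegrable_const hi12
        intro s hs
        have h1s : var s ≤ var u1 := hdec u1 s h1 hs.1 (le_trans hs.2 h2)
        have hks := hKge s
        rw [← hvar s] at hks
        have hc'0 : (0:ℝ) < w * (1 - w) := mul_pos hw0 (by linarith)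
        nlinarith [hks, h1s, hc'0]
      rw [intervalIntegral.integral_const, smul_eq_mul] at hlb
      nlinarith [hlb, e12]
    constructor
    · exact hdec 0 T le_rfl hT le_rfl
    · have hg := gronwall_discrete var (8 * (w * (1 - w))) T (by nlinarith) hT hv00 hstep
      have harg : -(8 * (w * (1 - w)) * T) = -(8 * w * (1 - w) * T) := by ring
      rw [harg] at hg
      exact hg
  · -- non-integrable case: the interval integral is zero by convention
    have h0 : ∫ s in (0:ℝ)..T, K s = 0 := intervalIntegral.integral_undef hint
    have hvT : var T = var 0 := by rw [hvv T hT, h0, add_zero]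
    constructor
    · exact hvT.le
    · have hexp : Real.exp (-(8 * w * (1 - w) * T)) ≤ 1 :=
        exp_le_one_iff.2 (by nlinarith [mul_nonneg (mul_nonneg hw0.le
          (by linarith : (0:ℝ) ≤ 1 - w)) hT])
      rw [hvT]
      exact mul_le_of_le_one_right hv00 hexp
end

section
/- Monotonicity of essential support: if m solves the mean-field equation and m(t₀)([0,a)) = 0 for some a ∈ [0,1] and t₀ ≥ 0, then m(t)([0,a)) = 0 for all t ≥ t₀. (Hence ess inf m(t) is non-decreasing in t.) -/
/-!
Let `φ(s) = m(s)((-∞, a))`, which is `m(s)([0, a))` because `m(s)` lives on `[0, 1]`. Testing the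
weak equation against the indicator of `(-∞, a)` gives `φ(t) = φ(0) + ∫₀ᵗ F`. A collision changes
this indicator only if one partner lies below `a`, since a convex combination of two points `≥ a`
is `≥ a`; hence `|F| ≤ 2φ`. On any `[0, T] ∋ t₀` on which `F` is integrable, Grönwall's inequality,
run forward and backward from `t₀` where `φ` vanishes, gives `φ ≡ 0`. If `F` is not integrable on
`[0, t]`, the interval integral takes its junk value `0` and the equation only says
`φ(t) = φ(0)`; then `φ(0) = 0` by the same argument on `[0, t₀]`, or, if that fails too, because
`φ(0) = φ(t₀)` for the same reason.
-/

open MeasureTheory Set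

noncomputable def collisionKernel (Δ w : ℝ) (h : ℝ → ℝ) (x y : ℝ) : ℝ :=
  if |x - y| ≤ Δ then h (w * x + (1 - w) * y) + h (w * y + (1 - w) * x) - h x - h y else 0

theorem abs_collisionKernel_indicator_Iio_le {w : ℝ} (hw : w ∈ Icc (0 : ℝ) 1) (Δ a x y : ℝ) :
    |collisionKernel Δ w ((Iio a).indicator 1) x y| ≤
      (Iio a).indicator 1 x + (Iio a).indicator 1 y := by
  have hconv : ∀ u v, a ≤ u → a ≤ v → a ≤ w * u + (1 - w) * v := fun u v hu hv => by
    nlinarith [mul_nonneg hw.1 (sub_nonneg.2 hu), mul_nonneg (sub_nonneg.2 hw.2) (sub_nonneg.2 hv)]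
  simp only [collisionKernel, indicator_apply, mem_Iio, Pi.one_apply]
  split_ifs <;> first
    | (push Not at *; linarith [hconv x y ‹a ≤ x› ‹a ≤ y›, hconv y x ‹a ≤ y› ‹a ≤ x›])
    | norm_num

theorem abs_integral_integral_le_of_abs_le_add {α : Type*} [MeasurableSpace α] {μ : Measure α}
    [IsProbabilityMeasure μ] {K : α → α → ℝ} {g : α → ℝ} (hg : Integrable g μ)
    (hK : ∀ x y, |K x y| ≤ g x + g y) :
    |∫ x, ∫ y, K x y ∂μ ∂μ| ≤ 2 * ∫ x, g x ∂μ := by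
  have hinner : ∀ x, |∫ y, K x y ∂μ| ≤ g x + ∫ y, g y ∂μ := fun x => by
    have := norm_integral_le_of_norm_le (g := fun y => g x + g y) ((integrable_const (g x)).add hg)
      (.of_forall fun y => (Real.norm_eq_abs _).trans_le (hK x y))
    rwa [integral_add (integrable_const _) hg, integral_const, probReal_univ, one_smul] at this
  have := norm_integral_le_of_norm_le (g := fun x => g x + ∫ y, g y ∂μ)
    (hg.add (integrable_const _))
    (.of_forall fun x => (Real.norm_eq_abs _).trans_le (hinner x))
  rw [integral_add hg (integrable_const _), integral_const, probReal_univ, one_smul] at this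
  rwa [Real.norm_eq_abs, ← two_mul] at this

theorem abs_integral_integral_collisionKernel_indicator_Iio_le {w : ℝ} (hw : w ∈ Icc (0 : ℝ) 1)
    (Δ a : ℝ) (μ : Measure ℝ) [IsProbabilityMeasure μ] :
    |∫ x, ∫ y, collisionKernel Δ w ((Iio a).indicator 1) x y ∂μ ∂μ| ≤ 2 * μ.real (Iio a) := by
  rw [← integral_indicator_one measurableSet_Iio]
  exact abs_integral_integral_le_of_abs_le_add
    ((integrable_const 1).indicator measurableSet_Iio)
    (abs_collisionKernel_indicator_Iio_le hw Δ a)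

theorem hasDerivWithinAt_integral_Ici_of_continuousOn {u : ℝ → ℝ} {a b x : ℝ}
    (hu : ContinuousOn u (Icc a b)) (hx : x ∈ Ico a b) :
    HasDerivWithinAt (fun y => ∫ r in a..y, u r) (u x) (Ici x) x := by
  have : Fact (x ∈ Icc a b) := ⟨Ico_subset_Icc_self hx⟩
  have hderiv : HasDerivWithinAt (fun y => ∫ r in a..y, u r) (u x) (Icc a b) x :=
    intervalIntegral.integral_hasDerivWithinAt_right
      ((hu.mono (Icc_subset_Icc_right hx.2.le)).intervalIntegrable_of_Icc hx.1)
      (hu.stronglyMeasurableAtFilter_nhdsWithin measurableSet_Icc x)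
      (hu x (Ico_subset_Icc_self hx))
  exact hderiv.mono_of_mem_nhdsWithin
    (Filter.mem_of_superset (Icc_mem_nhdsGE hx.2) (Icc_subset_Icc_left hx.1))

theorem eqOn_zero_of_le_mul_integral {u : ℝ → ℝ} {K a b : ℝ} (hu : ContinuousOn u (Icc a b))
    (hu₀ : ∀ x ∈ Icc a b, 0 ≤ u x) (hle : ∀ x ∈ Icc a b, u x ≤ K * ∫ r in a..x, u r) :
    EqOn u 0 (Icc a b) := by
  have hprim_cont : ContinuousOn (fun y => ∫ r in a..y, u r) (Icc a b) := by
    rcases le_or_gt a b with hab | hab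
    · have := intervalIntegral.continuousOn_primitive_interval (μ := volume) (f := u) (a := a)
        (b := b) (by rw [uIcc_of_le hab]; exact hu.integrableOn_Icc)
      rwa [uIcc_of_le hab] at this
    · rw [Icc_eq_empty_of_lt hab]
      exact continuousOn_empty _
  have hprim_zero : EqOn (fun y => ∫ r in a..y, u r) 0 (Icc a b) :=
    eq_zero_of_abs_deriv_le_mul_abs_self_of_eq_zero_right (K := |K|) hprim_cont
      (fun x hx => hasDerivWithinAt_integral_Ici_of_continuousOn hu hx)
      intervalIntegral.integral_same
      (fun x hx => by
        have hx' := Ico_subset_Icc_self hx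
        rw [Real.norm_eq_abs, Real.norm_eq_abs, abs_of_nonneg (hu₀ x hx'), ← abs_mul]
        exact (hle x hx').trans (le_abs_self _))
  intro x hx
  have hux := hle x hx
  rw [show ∫ r in a..x, u r = 0 from hprim_zero hx, mul_zero] at hux
  exact le_antisymm hux (hu₀ x hx)

theorem eqOn_zero_of_le_mul_integral_right {u : ℝ → ℝ} {K a b : ℝ}
    (hu : ContinuousOn u (Icc a b)) (hu₀ : ∀ x ∈ Icc a b, 0 ≤ u x)
    (hle : ∀ x ∈ Icc a b, u x ≤ K * ∫ r in x..b, u r) :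
    EqOn u 0 (Icc a b) := by
  have hreflect : MapsTo (fun x => a + b - x) (Icc a b) (Icc a b) := fun x hx =>
    ⟨by linarith [hx.2], by linarith [hx.1]⟩
  have hzero : EqOn (fun x => u (a + b - x)) 0 (Icc a b) := by
    refine eqOn_zero_of_le_mul_integral (K := K) (hu.comp (by fun_prop) hreflect)
      (fun x hx => hu₀ _ (hreflect hx)) fun x hx => ?_
    rw [intervalIntegral.integral_comp_sub_left u, add_sub_cancel_left]
    exact hle _ (hreflect hx)
  intro x hx
  simpa using hzero (hreflect hx)

theorem eqOn_zero_of_eq_integral_of_abs_le {φ F : ℝ → ℝ} {K a b c : ℝ}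
    (hF : IntervalIntegrable F volume a b) (hφ : ∀ x ∈ Icc a b, φ x = φ a + ∫ r in a..x, F r)
    (hφ₀ : ∀ x, 0 ≤ φ x) (hFφ : ∀ x, |F x| ≤ K * φ x) (hc : c ∈ Icc a b) (hφc : φ c = 0) :
    EqOn φ 0 (Icc a b) := by
  have hab : a ≤ b := hc.1.trans hc.2
  have hF_on : ∀ x ∈ Icc a b, ∀ y ∈ Icc a b, IntervalIntegrable F volume x y := fun x hx y hy =>
    hF.mono_set (uIcc_subset_uIcc (by simpa [uIcc_of_le hab] using hx)
      (by simpa [uIcc_of_le hab] using hy))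
  have hφ_cont : ContinuousOn φ (Icc a b) := by
    have := intervalIntegral.continuousOn_primitive_interval' hF left_mem_uIcc
    rw [uIcc_of_le hab] at this
    exact (continuousOn_const.add this).congr hφ
  have hlip : ∀ x ∈ Icc a b, ∀ y ∈ Icc a b, y ≤ x → |φ x - φ y| ≤ K * ∫ r in y..x, φ r := by
    intro x hx y hy hyx
    have hsub : φ x - φ y = ∫ r in y..x, F r := by
      rw [hφ x hx, hφ y hy, add_sub_add_left_eq_sub,
        intervalIntegral.integral_interval_sub_left (hF_on a (left_mem_Icc.2 hab) x hx)
          (hF_on a (left_mem_Icc.2 hab) y hy)]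
    rw [hsub, ← intervalIntegral.integral_const_mul]
    refine (intervalIntegral.abs_integral_le_integral_abs hyx).trans
      (intervalIntegral.integral_mono_on hyx (hF_on y hy x hx).abs ?_ fun r _ => hFφ r)
    exact ((hφ_cont.mono (Icc_subset_Icc hy.1 hx.2)).intervalIntegrable_of_Icc hyx).const_mul K
  intro x hx
  rcases le_total c x with hcx | hxc
  · refine eqOn_zero_of_le_mul_integral (K := K) (hφ_cont.mono (Icc_subset_Icc_left hc.1))
      (fun y _ => hφ₀ y) (fun y hy => ?_) ⟨hcx, hx.2⟩
    simpa [hφc, abs_of_nonneg (hφ₀ y)] using hlip y ⟨hc.1.trans hy.1, hy.2⟩ c hc hy.1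
  · refine eqOn_zero_of_le_mul_integral_right (K := K) (hφ_cont.mono (Icc_subset_Icc_right hc.2))
      (fun y _ => hφ₀ y) (fun y hy => ?_) ⟨hx.1, hxc⟩
    simpa [hφc, abs_of_nonneg (hφ₀ y)] using hlip c hc y ⟨hy.1, hy.2.trans hc.2⟩ hy.2

theorem ess_inf_monotone_general (Δ w : ℝ)
    (hw : w ∈ Set.Ioo (0:ℝ) 1)
    (m : ℝ → Measure ℝ)
    (hprob : ∀ t, IsProbabilityMeasure (m t))
    (hsupp : ∀ t, m t (Set.Icc (0:ℝ) 1)ᶜ = 0)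
    (heq : ∀ h : ℝ → ℝ, Measurable h → (∃ C, ∀ u, |h u| ≤ C) →
      ∀ t : ℝ, 0 ≤ t →
        (∫ x, h x ∂ m t) - (∫ x, h x ∂ m 0) =
          ∫ s in (0:ℝ)..t, ∫ x, (∫ y,
            (if |x - y| ≤ Δ then
              h (w * x + (1 - w) * y) + h (w * y + (1 - w) * x) - h x - h y
            else 0) ∂ m s) ∂ m s)
    (a : ℝ) (ha : a ∈ Set.Icc (0:ℝ) 1) (t₀ : ℝ) (ht₀ : 0 ≤ t₀)
    (hzero : m t₀ (Set.Ico (0:ℝ) a) = 0) :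
    ∀ t : ℝ, t₀ ≤ t → m t (Set.Ico (0:ℝ) a) = 0 := by
  intro t ht
  let φ s := (m s).real (Iio a)
  let F s := ∫ x, ∫ y, collisionKernel Δ w ((Iio a).indicator 1) x y ∂m s ∂m s
  have hφ : ∀ s, 0 ≤ s → φ s = φ 0 + ∫ r in 0..s, F r := fun s hs => by
    have := heq ((Iio a).indicator 1) (measurable_one.indicator measurableSet_Iio)
      ⟨1, fun u => by simp only [indicator_apply]; split_ifs <;> norm_num⟩ s hs
    rw [integral_indicator_one measurableSet_Iio, integral_indicator_one measurableSet_Iio] at this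
    exact sub_eq_iff_eq_add'.1 this
  have hFφ : ∀ s, |F s| ≤ 2 * φ s := fun s =>
    abs_integral_integral_collisionKernel_indicator_Iio_le (Ioo_subset_Icc_self hw) Δ a (m s)
  have hφt₀ : φ t₀ = 0 := by
    refine (measureReal_eq_zero_iff (measure_ne_top _ _)).2 ?_
    rw [← Iio_union_Ico_eq_Iio ha.1]
    exact measure_union_null (measure_mono_null (fun x hx => fun hx' => not_le.2 hx hx'.1)
      (hsupp t₀)) hzero
  have hφ_eqOn : ∀ T, t₀ ≤ T → IntervalIntegrable F volume 0 T → EqOn φ 0 (Icc 0 T) :=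
    fun T hT hF => eqOn_zero_of_eq_integral_of_abs_le hF (fun s hs => hφ s hs.1)
      (fun s => measureReal_nonneg) hFφ ⟨ht₀, hT⟩ hφt₀
  suffices φ t = 0 from
    measure_mono_null Ico_subset_Iio_self ((measureReal_eq_zero_iff (measure_ne_top _ _)).1 this)
  by_cases hI : IntervalIntegrable F volume 0 t
  · exact hφ_eqOn t ht hI ⟨ht₀.trans ht, le_rfl⟩
  rw [hφ t (ht₀.trans ht), intervalIntegral.integral_undef hI, add_zero]
  by_cases hI₀ : IntervalIntegrable F volume 0 t₀
  · exact hφ_eqOn t₀ le_rfl hI₀ ⟨le_rfl, ht₀⟩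
  · have := hφ t₀ ht₀
    rwa [intervalIntegral.integral_undef hI₀, add_zero, hφt₀, eq_comm] at this

theorem ess_inf_monotone (Δ w : ℝ) (hΔ : Δ ∈ Set.Ioc (0:ℝ) 1)
    (hw : w ∈ Set.Ioo (0:ℝ) 1)
    (m : ℝ → Measure ℝ)
    (hprob : ∀ t, IsProbabilityMeasure (m t))
    (hsupp : ∀ t, m t (Set.Icc (0:ℝ) 1)ᶜ = 0)
    (heq : ∀ h : ℝ → ℝ, Measurable h → (∃ C, ∀ u, |h u| ≤ C) →
      ∀ t : ℝ, 0 ≤ t →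
        (∫ x, h x ∂ m t) - (∫ x, h x ∂ m 0) =
          ∫ s in (0:ℝ)..t, ∫ x, (∫ y,
            (if |x - y| ≤ Δ then
              h (w * x + (1 - w) * y) + h (w * y + (1 - w) * x) - h x - h y
            else 0) ∂ m s) ∂ m s)
    (a : ℝ) (ha : a ∈ Set.Icc (0:ℝ) 1) (t₀ : ℝ) (ht₀ : 0 ≤ t₀)
    (hzero : m t₀ (Set.Ico (0:ℝ) a) = 0) :
    ∀ t : ℝ, t₀ ≤ t → m t (Set.Ico (0:ℝ) a) = 0 :=
  ess_inf_monotone_general Δ w hw m hprob hsupp heq a ha t₀ ht₀ hzero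
end

section
/- If the initial density f(·,0) is bounded by M(0), then the solution of the bounded confidence kinetic PDE satisfies the a priori bound M(t) ≤ e^{(2/w + 2/(1-w))t}·(M(0) + 4) - 4, where M(t) = sup_x |f(x,t)|; more precisely, any nonnegative f with ∫_0^1 f(x,t)dx = 1 satisfies the gain-term bound (2/w)·∫ f(y,t)·f((x-(1-w)y)/w, t) dy ≤ (2/w + 2/(1-w))·(M(t) + 4) for all x. -/
/-!
The loss term removes mass at rate at most `2 f`, and the gain term is at most `(2/w) M(t)`
because `f ≤ M(t)` and `f(·,t)` has mass one; so every `f(x,·)` satisfies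
`-2 f ≤ ∂ₜ f ≤ (2/w) M`. The lower bound makes `f e^{2t}` nondecreasing, so `M` is locally
bounded and hence Lipschitz; the upper bound then gives `M` right Dini derivatives at most
`(2/w) M`, and Grönwall's inequality yields `M(t) ≤ M(0) e^{2t/w}`.
-/

open MeasureTheory Real intervalIntegral

open Set Filter Topology

namespace UpperEnvelope

variable {ι : Type*} {u u' : ι → ℝ → ℝ} {M : ℝ → ℝ} {a k : ℝ}
  (hM : ∀ t, M t = ⨆ i, u i t) (hbdd : ∀ t, BddAbove (range fun i => u i t))
include hM hbdd

theorem apply_le (i : ι) (t : ℝ) : u i t ≤ M t := hM t ▸ le_ciSup (hbdd t) i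

variable [Nonempty ι]

theorem le_add_of_forall_le_add {s t c : ℝ} (h : ∀ i, u i t ≤ u i s + c) : M t ≤ M s + c := by
  rw [hM t]
  exact ciSup_le fun i => (h i).trans (by gcongr; exact apply_le hM hbdd i s)

variable (hu : ∀ i t, HasDerivAt (u i) (u' i t) t)
include hu

theorem le_add_mul_of_deriv_le {s t C : ℝ} (hst : s ≤ t)
    (hC : ∀ i, ∀ r ∈ Icc s t, u' i r ≤ C) : M t ≤ M s + C * (t - s) := by
  refine le_add_of_forall_le_add hM hbdd fun i => ?_
  have := (convex_Icc s t).image_sub_le_mul_sub_of_deriv_le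
    (fun r _ => (hu i r).continuousAt.continuousWithinAt)
    (fun r _ => (hu i r).differentiableAt.differentiableWithinAt)
    (fun r hr => (hu i r).deriv ▸ hC i r (interior_subset hr))
    s (left_mem_Icc.2 hst) t (right_mem_Icc.2 hst) hst
  linarith

theorem le_add_mul_of_le_deriv {s t C : ℝ} (hst : s ≤ t)
    (hC : ∀ i, ∀ r ∈ Icc s t, -C ≤ u' i r) : M s ≤ M t + C * (t - s) := by
  refine le_add_of_forall_le_add hM hbdd fun i => ?_
  have := (convex_Icc s t).mul_sub_le_image_sub_of_le_deriv
    (fun r _ => (hu i r).continuousAt.continuousWithinAt)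
    (fun r _ => (hu i r).differentiableAt.differentiableWithinAt)
    (fun r hr => (hu i r).deriv ▸ hC i r (interior_subset hr))
    s (left_mem_Icc.2 hst) t (right_mem_Icc.2 hst) hst
  linarith

section

variable (hk : 0 ≤ k) (hupper : ∀ i t, u' i t ≤ k * M t)
include hk hupper

theorem slope_le_of_forall_le_on_Icc {s t x z C : ℝ} (hC0 : 0 ≤ C) (hC : ∀ r ∈ Icc s t, M r ≤ C)
    (hx : s ≤ x) (hz : z ∈ Ioc x t) :
    (z - x)⁻¹ * (M z - M x) ≤ k * (M x + k * C * (z - x)) := by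
  have hMxz : ∀ r ∈ Icc x z, M r ≤ M x + k * C * (z - x) := fun r hr => by
    have := le_add_mul_of_deriv_le hM hbdd hu hr.1 (C := k * C) fun i r' hr' =>
      (hupper i r').trans (by gcongr; exact hC r' ⟨hx.trans hr'.1, hr'.2.trans (hr.2.trans hz.2)⟩)
    nlinarith [mul_nonneg (mul_nonneg hk hC0) (sub_nonneg.2 hr.2)]
  have := le_add_mul_of_deriv_le hM hbdd hu hz.1.le fun i r hr =>
    (hupper i r).trans (mul_le_mul_of_nonneg_left (hMxz r hr) hk)
  rw [inv_mul_le_iff₀ (sub_pos.2 hz.1)]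
  linarith

end

variable (hlower : ∀ i t, -(a * u i t) ≤ u' i t)
include hlower

theorem le_exp_mul_of_le {s t : ℝ} (hst : s ≤ t) : M s ≤ exp (a * (t - s)) * M t := by
  rw [hM s]
  refine ciSup_le fun i => ?_
  have hmono : Monotone fun r => u i r * exp (a * r) := by
    have hderiv : ∀ r, HasDerivAt (fun r => u i r * exp (a * r))
        ((u' i r + a * u i r) * exp (a * r)) r := fun r => by
      have hexp : HasDerivAt (fun r => exp (a * r)) (exp (a * r) * a) r := by
        simpa using ((hasDerivAt_id r).const_mul a).exp
      exact ((hu i r).mul hexp).congr_deriv (by ring)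
    refine monotone_of_deriv_nonneg (fun r => (hderiv r).differentiableAt) fun r => ?_
    rw [(hderiv r).deriv]
    exact mul_nonneg (by linarith [hlower i r]) (exp_pos _).le
  have := (hmono hst).trans (mul_le_mul_of_nonneg_right (apply_le hM hbdd i t) (exp_pos _).le)
  rw [mul_sub, exp_sub, ← mul_div_right_comm, le_div_iff₀ (exp_pos _)]
  linarith

variable (ha : 0 ≤ a)
include ha

theorem exists_nonneg_bound_on_Icc (s t : ℝ) : ∃ C, 0 ≤ C ∧ ∀ r ∈ Icc s t, M r ≤ C := by
  refine ⟨exp (a * (t - s)) * |M t|, by positivity, fun r hr => ?_⟩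
  calc M r ≤ exp (a * (t - r)) * M t := le_exp_mul_of_le hM hbdd hu hlower hr.2
    _ ≤ exp (a * (t - r)) * |M t| := by gcongr; exact le_abs_self _
    _ ≤ exp (a * (t - s)) * |M t| := by gcongr; exact hr.1

variable (hk : 0 ≤ k) (hupper : ∀ i t, u' i t ≤ k * M t)
include hk hupper

theorem continuousOn_Icc (s t : ℝ) : ContinuousOn M (Icc s t) := by
  obtain ⟨C, hC0, hC⟩ := exists_nonneg_bound_on_Icc hM hbdd hu hlower ha s t
  refine (LipschitzOnWith.of_le_add_mul' ((k + a) * C) fun x hx y hy => ?_).continuousOn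
  rcases le_total y x with hyx | hxy
  · have := le_add_mul_of_deriv_le hM hbdd hu hyx (C := k * C) fun i r hr =>
      (hupper i r).trans (by gcongr; exact hC r ⟨hy.1.trans hr.1, hr.2.trans hx.2⟩)
    rw [Real.dist_eq, abs_of_nonneg (sub_nonneg.2 hyx)]
    nlinarith [mul_nonneg (mul_nonneg ha hC0) (sub_nonneg.2 hyx)]
  · have := le_add_mul_of_le_deriv hM hbdd hu hxy (C := a * C) fun i r hr =>
      le_trans (neg_le_neg (mul_le_mul_of_nonneg_left ((apply_le hM hbdd i r).trans
        (hC r ⟨hx.1.trans hr.1, hr.2.trans hy.2⟩)) ha)) (hlower i r)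
    rw [Real.dist_eq, abs_of_nonpos (sub_nonpos.2 hxy)]
    nlinarith [mul_nonneg (mul_nonneg hk hC0) (sub_nonneg.2 hxy)]

theorem le_mul_exp {s t : ℝ} (hst : s ≤ t) : M t ≤ M s * exp (k * (t - s)) := by
  obtain ⟨C, hC0, hC⟩ := exists_nonneg_bound_on_Icc hM hbdd hu hlower ha s t
  refine (le_gronwallBound_of_liminf_deriv_right_le (f' := fun r => k * M r) (ε := 0)
    (continuousOn_Icc hM hbdd hu hlower ha hk hupper s t) (fun x hx r hr => ?_) le_rfl
    (fun r _ => (add_zero _).ge) t (right_mem_Icc.2 hst)).trans_eq (gronwallBound_ε0 _ _ _)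
  have hlim : Tendsto (fun z => k * (M x + k * C * (z - x))) (𝓝[>] x) (𝓝 (k * M x)) :=
    tendsto_nhdsWithin_of_tendsto_nhds ((by fun_prop : Continuous
      fun z => k * (M x + k * C * (z - x))).tendsto' x _ (by simp))
  refine ((hlim.eventually (gt_mem_nhds hr)).and (Ioc_mem_nhdsGT hx.2)).frequently.mono ?_
  rintro z ⟨hzr, hz⟩
  exact (slope_le_of_forall_le_on_Icc hM hbdd hu hk hupper hC0 hC hx.1 hz).trans_lt hzr

end UpperEnvelope

section Density

variable {g : ℝ → ℝ} {c d : ℝ}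

theorem integrable_of_intervalIntegral_eq_one (hcd : c ≤ d) (hzero : ∀ x ∉ Icc c d, g x = 0)
    (hmass : ∫ x in c..d, g x = 1) : Integrable g := by
  have hII : IntervalIntegrable g volume c d :=
    intervalIntegrable_of_integral_ne_zero (by rw [hmass]; exact one_ne_zero)
  refine (integrableOn_iff_integrable_of_support_subset fun x hx => ?_).1
    ((intervalIntegrable_iff_integrableOn_Icc_of_le hcd).1 hII)
  by_contra h
  exact hx (hzero x h)

theorem integral_eq_one_of_intervalIntegral_eq_one (hcd : c ≤ d)
    (hzero : ∀ x ∉ Icc c d, g x = 0) (hmass : ∫ x in c..d, g x = 1) : ∫ x, g x = 1 := by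
  rw [← setIntegral_eq_integral_of_forall_compl_eq_zero hzero, integral_Icc_eq_integral_Ioc,
    ← intervalIntegral.integral_of_le hcd, hmass]

variable (hcd : c ≤ d) (hg0 : ∀ x, 0 ≤ g x) (hzero : ∀ x ∉ Icc c d, g x = 0)
  (hmass : ∫ x in c..d, g x = 1)
include hcd hg0 hzero hmass

theorem intervalIntegral_mem_Icc {a b : ℝ} (hab : a ≤ b) : ∫ x in a..b, g x ∈ Icc 0 1 := by
  refine ⟨intervalIntegral.integral_nonneg hab fun x _ => hg0 x, ?_⟩
  rw [intervalIntegral.integral_of_le hab,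
    ← integral_eq_one_of_intervalIntegral_eq_one hcd hzero hmass]
  exact setIntegral_le_integral (integrable_of_intervalIntegral_eq_one hcd hzero hmass)
    (Eventually.of_forall hg0)

theorem intervalIntegral_comp_mul_mem_Icc (φ : ℝ → ℝ) {m a b : ℝ} (hgm : ∀ x, g x ≤ m)
    (hab : a ≤ b) : ∫ y in a..b, g (φ y) * g y ∈ Icc 0 m := by
  have hprod_nonneg : ∀ y, 0 ≤ g (φ y) * g y := fun y => mul_nonneg (hg0 _) (hg0 y)
  refine ⟨intervalIntegral.integral_nonneg hab fun y _ => hprod_nonneg y, ?_⟩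
  calc ∫ y in a..b, g (φ y) * g y ≤ ∫ y in a..b, m * g y := by
        rw [intervalIntegral.integral_of_le hab, intervalIntegral.integral_of_le hab]
        exact integral_mono_of_nonneg (Eventually.of_forall hprod_nonneg)
          ((integrable_of_intervalIntegral_eq_one hcd hzero hmass).integrableOn.const_mul m)
          (Eventually.of_forall fun y => mul_le_mul_of_nonneg_right (hgm _) (hg0 y))
    _ = m * ∫ y in a..b, g y := intervalIntegral.integral_const_mul m _
    _ ≤ m := mul_le_of_le_one_right ((hg0 0).trans (hgm 0))
        (intervalIntegral_mem_Icc hcd hg0 hzero hmass hab).2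

end Density

theorem mul_exp_le_exp_mul_add_sub {m k c t b : ℝ} (hm : 0 ≤ m) (hb : 0 ≤ b) (hk : 0 ≤ k)
    (hkc : k ≤ c) (ht : 0 ≤ t) : m * exp (k * t) ≤ exp (c * t) * (m + b) - b := by
  have h1 : exp (k * t) ≤ exp (c * t) := by gcongr
  have h2 : 1 ≤ exp (c * t) := one_le_exp (by nlinarith)
  nlinarith

theorem density_apriori_bound (w Δ : ℝ) (hw : w ∈ Set.Ioo (0:ℝ) 1)
    (hΔ : Δ ∈ Set.Ioc (0:ℝ) 1)
    (f : ℝ → ℝ → ℝ)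
    (hnonneg : ∀ x t, 0 ≤ f x t)
    (hzero : ∀ x t, x ∉ Set.Icc (0:ℝ) 1 → f x t = 0)
    (hmass : ∀ t, ∫ x in (0:ℝ)..1, f x t = 1)
    (M : ℝ → ℝ)
    (hM : ∀ t, M t = ⨆ x, f x t)
    (hbdd : ∀ t, BddAbove (Set.range fun x => f x t))
    (hpde : ∀ x t, HasDerivAt (fun s => f x s)
      ((2 / w) * (∫ y in (x - Δ * w)..(x + Δ * w), f ((x - (1 - w) * y) / w) t * f y t)
        - 2 * f x t * ∫ y in (x - Δ)..(x + Δ), f y t) t) :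
    (∀ t : ℝ, 0 ≤ t →
        M t ≤ exp ((2 / w + 2 / (1 - w)) * t) * (M 0 + 4) - 4) ∧
      (∀ x t : ℝ,
        (2 / w) * (∫ y in (x - Δ * w)..(x + Δ * w), f ((x - (1 - w) * y) / w) t * f y t)
          ≤ (2 / w + 2 / (1 - w)) * (M t + 4)) := by
  obtain ⟨hw0, hw1⟩ := hw
  have h2w : 0 < 2 / w := by positivity
  have h2w' : 0 < 2 / (1 - w) := div_pos two_pos (sub_pos.2 hw1)
  have hle : ∀ x t, f x t ≤ M t := UpperEnvelope.apply_le hM hbdd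
  have hM0 : ∀ t, 0 ≤ M t := fun t => (hnonneg 0 t).trans (hle 0 t)
  have hgain : ∀ x t, ∫ y in (x - Δ * w)..(x + Δ * w), f ((x - (1 - w) * y) / w) t * f y t
      ∈ Icc 0 (M t) := fun x t =>
    intervalIntegral_comp_mul_mem_Icc zero_le_one (hnonneg · t) (hzero · t) (hmass t) _
      (hle · t) (by nlinarith [hΔ.1])
  have hloss : ∀ x t, ∫ y in (x - Δ)..(x + Δ), f y t ∈ Icc 0 1 := fun x t =>
    intervalIntegral_mem_Icc zero_le_one (hnonneg · t) (hzero · t) (hmass t) (by linarith [hΔ.1])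
  refine ⟨fun t ht => ?_, fun x t => ?_⟩
  · refine (UpperEnvelope.le_mul_exp hM hbdd hpde (fun x t => ?lower) zero_le_two h2w.le
      (fun x t => ?upper) ht).trans ?_
    case lower => nlinarith [(hgain x t).1, (hloss x t).2, hnonneg x t]
    case upper => nlinarith [(hgain x t).2, (hloss x t).1, hnonneg x t]
    rw [sub_zero]
    exact mul_exp_le_exp_mul_add_sub (hM0 0) zero_le_four h2w.le (by linarith) ht
  · nlinarith [(hgain x t).2, hM0 t]
end

section
/- Time-derivative bound for the kinetic PDE: any solution with bounded density satisfies sup_x |∂_t f(x,t)| ≤ (2/w + 2/(1-w))·(M(t) + 4), where M(t) = sup_x f(x,t). -/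
open MeasureTheory Real intervalIntegral

theorem time_derivative_bound (w Δ : ℝ) (hw : w ∈ Set.Ioo (0:ℝ) 1)
    (hΔ : Δ ∈ Set.Ioc (0:ℝ) 1)
    (f : ℝ → ℝ → ℝ) (D : ℝ → ℝ → ℝ)
    (hnonneg : ∀ x t, 0 ≤ f x t)
    (hzero : ∀ x t, x ∉ Set.Icc (0:ℝ) 1 → f x t = 0)
    (hmass : ∀ t, ∫ x in (0:ℝ)..1, f x t = 1)
    (M : ℝ → ℝ)
    (hM : ∀ t, M t = ⨆ x, f x t)
    (hbdd : ∀ t, BddAbove (Set.range fun x => f x t))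
    (hderiv : ∀ x t, HasDerivAt (fun s => f x s) (D x t) t)
    (hpde : ∀ x t, D x t =
      (2 / w) * (∫ y in (x - Δ * w)..(x + Δ * w), f ((x - (1 - w) * y) / w) t * f y t)
        - 2 * f x t * ∫ y in (x - Δ)..(x + Δ), f y t) :
    ∀ x t : ℝ, |D x t| ≤ (2 / w + 2 / (1 - w)) * (M t + 4) := by
  intro x t
  obtain ⟨hw0, hw1⟩ := hw
  obtain ⟨hΔ0, hΔ1⟩ := hΔ
  have h1w : (0:ℝ) < 1 - w := by linarith
  set g : ℝ → ℝ := fun y => f y t with hg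
  -- interval integrability on [0,1] forced by hmass
  have hgInt01 : IntervalIntegrable g volume 0 1 := by
    by_contra h
    have h0 : (∫ y in (0:ℝ)..1, g y) = 0 := intervalIntegral.integral_undef h
    rw [hmass t] at h0
    exact one_ne_zero h0
  have hgIcc : IntegrableOn g (Set.Icc 0 1) :=
    (intervalIntegrable_iff_integrableOn_Icc_of_le (by norm_num : (0:ℝ) ≤ 1)).mp hgInt01
  have hgeq : g = Set.indicator (Set.Icc 0 1) g := by
    funext y
    by_cases hy : y ∈ Set.Icc (0:ℝ) 1
    · simp [Set.indicator_of_mem hy]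
    · simp [Set.indicator_of_notMem hy, hg, hzero y t hy]
  have hgInt : Integrable g volume := by
    rw [hgeq]
    exact (integrable_indicator_iff measurableSet_Icc).2 hgIcc
  have hmass' : (∫ y, g y) = 1 := by
    conv_lhs => rw [hgeq]
    rw [MeasureTheory.integral_indicator measurableSet_Icc, MeasureTheory.integral_Icc_eq_integral_Ioc,
      ← intervalIntegral.integral_of_le (by norm_num : (0:ℝ) ≤ 1)]
    exact hmass t
  have hJle : ∀ a b : ℝ, a ≤ b → (∫ y in a..b, g y) ≤ 1 := by
    intro a b hab
    rw [intervalIntegral.integral_of_le hab, ← hmass']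
    exact setIntegral_le_integral hgInt
      (Filter.Eventually.of_forall fun y => hnonneg y t)
  have hfle : ∀ z, f z t ≤ M t := by
    intro z
    rw [hM t]
    exact le_ciSup (hbdd t) z
  have hMnn : 0 ≤ M t := le_trans (hnonneg 0 t) (hfle 0)
  -- bound the collision integral
  have hab1 : x - Δ * w ≤ x + Δ * w := by nlinarith
  have hab2 : x - Δ ≤ x + Δ := by linarith
  set I : ℝ := ∫ y in (x - Δ * w)..(x + Δ * w), f ((x - (1 - w) * y) / w) t * f y t with hI
  set J : ℝ := ∫ y in (x - Δ)..(x + Δ), f y t with hJ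
  have hIbound : |I| ≤ M t := by
    by_cases hint : IntervalIntegrable
        (fun y => f ((x - (1 - w) * y) / w) t * f y t) volume (x - Δ * w) (x + Δ * w)
    · have hnn : 0 ≤ I := intervalIntegral.integral_nonneg hab1
        (fun y _ => mul_nonneg (hnonneg _ t) (hnonneg y t))
      have hmono : I ≤ ∫ y in (x - Δ * w)..(x + Δ * w), M t * g y := by
        apply intervalIntegral.integral_mono_on hab1 hint
          (hgInt.intervalIntegrable.const_mul (M t))
        intro y _
        exact mul_le_mul_of_nonneg_right (hfle _) (hnonneg y t)
      have hconst : (∫ y in (x - Δ * w)..(x + Δ * w), M t * g y)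
          = M t * ∫ y in (x - Δ * w)..(x + Δ * w), g y := by
        exact intervalIntegral.integral_const_mul _ _
      rw [abs_of_nonneg hnn]
      calc I ≤ M t * ∫ y in (x - Δ * w)..(x + Δ * w), g y := by rw [← hconst]; exact hmono
        _ ≤ M t * 1 := mul_le_mul_of_nonneg_left (hJle _ _ hab1) hMnn
        _ = M t := mul_one _
    · rw [hI, intervalIntegral.integral_undef hint]
      simpa using hMnn
  have hJbound : |J| ≤ 1 := by
    have hnn : 0 ≤ J := intervalIntegral.integral_nonneg hab2 (fun y _ => hnonneg y t)
    rw [abs_of_nonneg hnn]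
    exact hJle _ _ hab2
  have hDx : D x t = (2 / w) * I - 2 * f x t * J := hpde x t
  have habs : |D x t| ≤ (2 / w) * M t + 2 * M t := by
    rw [hDx]
    have h2w : (0:ℝ) ≤ 2 / w := by positivity
    calc |(2 / w) * I - 2 * f x t * J| ≤ |(2 / w) * I| + |2 * f x t * J| := abs_sub _ _
      _ = (2 / w) * |I| + 2 * f x t * |J| := by
          rw [abs_mul, abs_mul, abs_of_nonneg h2w,
            abs_of_nonneg (by nlinarith [hnonneg x t] : (0:ℝ) ≤ 2 * f x t)]
      _ ≤ (2 / w) * M t + 2 * M t := by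
          have e1 : (2 / w) * |I| ≤ (2 / w) * M t := mul_le_mul_of_nonneg_left hIbound h2w
          have e2 : 2 * f x t * |J| ≤ 2 * M t * 1 :=
            mul_le_mul (by nlinarith [hfle x]) hJbound (abs_nonneg J) (by positivity)
          linarith
  refine habs.trans ?_
  have h2 : (2:ℝ) ≤ 2 / (1 - w) := by
    rw [le_div_iff₀ h1w]; nlinarith
  have h2w : (0:ℝ) < 2 / w := by positivity
  nlinarith [mul_nonneg (le_of_lt h2w) hMnn, mul_le_mul_of_nonneg_left h2 hMnn,
    mul_nonneg (le_of_lt h2w) (by norm_num : (0:ℝ) ≤ 4)]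
end
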